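/- arXiv:math/0511093 — 2 statements merged into one kernel-verified Lean document; each statement's English description precedes it below -/
import Mathlib

section
/- For each integer k ≥ 3, the limit as B → 0⁺ of h(B)/(2B²) equals 1/(2(k-1)(k-2)), where h(B) = ∫_0^1 ψ_k(B/√x) dx and ψ_k(y) = P(Po(y) ≥ k). -/
open MeasureTheory Filter

/-- `psi m x` is the probability that a Poisson random variable with mean `x`
takes a value at least `m`. -/
noncomputable def psi (m : ℕ) (x : ℝ) : ℝ :=
  ∑' t : ℕ, if m ≤ t then x ^ t * Real.exp (-x) / t.factorial else 0

/-- `h k B = ∫_0^1 ψ_k(B/√x) dx`. -/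
noncomputable def hFun (k : ℕ) (B : ℝ) : ℝ :=
  ∫ x in Set.Ioc (0 : ℝ) 1, psi k (B / Real.sqrt x)

/-! Substituting `y = B / √x` gives `h(B) / (2B²) = ∫_B^∞ ψ_k(y) y⁻³ dy`, which tends to
`∫_0^∞ ψ_k(y) y⁻³ dy` as `B → 0⁺`. Expanding `ψ_k` into its Poisson series and integrating term by
term against `Γ`, this integral is `∑_{t ≥ k} (t-3)!/t! = ∑_{t ≥ k} 1/((t-2)(t-1)t)`, which
telescopes to `1/(2(k-1)(k-2))`. -/

open Set Real
open scoped Nat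

theorem hasSum_pow_mul_exp_neg_div_factorial (y : ℝ) :
    HasSum (fun t : ℕ => y ^ t * exp (-y) / t !) 1 := by
  have h := (NormedSpace.expSeries_div_hasSum_exp y).mul_right (exp (-y))
  rw [← exp_eq_exp_ℝ, ← exp_add, add_neg_cancel, exp_zero] at h
  simpa only [div_mul_eq_mul_div] using h

theorem hasSum_psi (m : ℕ) (y : ℝ) :
    HasSum (fun n : ℕ => y ^ (n + m) * exp (-y) / (n + m)!) (psi m y) := by
  set F : ℕ → ℝ := fun t => if m ≤ t then y ^ t * exp (-y) / t ! else 0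
  have hF_shift : (fun n => F (n + m)) = fun n => y ^ (n + m) * exp (-y) / (n + m)! := by
    ext n; simp [F]
  have hF : Summable F := by
    rw [← summable_nat_add_iff m, hF_shift]
    exact (summable_nat_add_iff m).2 (hasSum_pow_mul_exp_neg_div_factorial y).summable
  have hF_head : ∑ i ∈ Finset.range m, F i = 0 :=
    Finset.sum_eq_zero fun i hi => if_neg (by simpa using hi)
  have h := (hasSum_nat_add_iff' m).2 hF.hasSum
  rw [hF_head, sub_zero, hF_shift] at h
  exact h

theorem hasSum_sub_succ_of_antitone {f : ℕ → ℝ} (hf : Antitone f)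
    (hf_lim : Tendsto f atTop (nhds 0)) : HasSum (fun n => f n - f (n + 1)) (f 0) := by
  rw [hasSum_iff_tendsto_nat_of_nonneg (fun n => sub_nonneg.2 (hf n.le_succ))]
  simp_rw [Finset.sum_range_sub']
  simpa using tendsto_const_nhds.sub hf_lim

theorem hasSum_one_div_mul_mul_add_two {a : ℝ} (ha : 0 < a) :
    HasSum (fun n : ℕ => 1 / ((n + a) * (n + a + 1) * (n + a + 2))) (1 / (2 * a * (a + 1))) := by
  set G : ℕ → ℝ := fun n => 1 / (2 * (n + a) * (n + a + 1))
  have hG : Antitone G := by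
    intro m n hmn
    have : (m : ℝ) ≤ n := by exact_mod_cast hmn
    dsimp only [G]
    gcongr
  have hG_lim : Tendsto G atTop (nhds 0) := by
    have h : Tendsto (fun n : ℕ => (n : ℝ) + a) atTop atTop :=
      tendsto_atTop_add_const_right _ a tendsto_natCast_atTop_atTop
    exact tendsto_const_nhds.div_atTop
      ((h.const_mul_atTop two_pos).atTop_mul_atTop₀ (tendsto_atTop_add_const_right _ 1 h))
  convert hasSum_sub_succ_of_antitone hG hG_lim using 1
  · ext n
    simp only [G]
    push_cast
    field_simp
    ring
  · simp [G]

theorem factorial_div_factorial_add_three (n : ℕ) :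
    (n ! : ℝ) / (n + 3)! = 1 / ((n + 1) * (n + 2) * (n + 3)) := by
  simp only [Nat.factorial_succ]
  push_cast
  field_simp
  ring

theorem integrableOn_exp_neg_mul_pow (n : ℕ) :
    IntegrableOn (fun x : ℝ => exp (-x) * x ^ n) (Ioi 0) := by
  simpa only [add_sub_cancel_right, rpow_natCast] using
    GammaIntegral_convergent (s := n + 1) (by positivity)

theorem integral_exp_neg_mul_pow (n : ℕ) : ∫ x in Ioi (0 : ℝ), exp (-x) * x ^ n = n ! := by
  simpa only [add_sub_cancel_right, rpow_natCast, Gamma_nat_eq_factorial] using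
    (Gamma_eq_integral (s := n + 1) (by positivity)).symm

theorem integrable_and_integral_eq_of_hasSum_of_nonneg {α : Type*} [MeasurableSpace α]
    {μ : Measure α} {F : ℕ → α → ℝ} {f : α → ℝ} {c : ℝ} (hF_nonneg : ∀ n, 0 ≤ᵐ[μ] F n)
    (hF_int : ∀ n, Integrable (F n) μ) (hf : ∀ᵐ a ∂μ, HasSum (fun n => F n a) (f a))
    (hc : HasSum (fun n => ∫ a, F n a ∂μ) c) :
    Integrable f μ ∧ ∫ a, f a ∂μ = c := by
  have hF_nonneg' : ∀ᵐ a ∂μ, ∀ n, 0 ≤ F n a := ae_all_iff.2 hF_nonneg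
  have hf_nonneg : 0 ≤ᵐ[μ] f := by
    filter_upwards [hf, hF_nonneg'] with a ha hFa using ha.nonneg hFa
  have hf_meas : AEStronglyMeasurable f μ :=
    aestronglyMeasurable_of_tendsto_ae atTop
      (fun n => Finset.aestronglyMeasurable_fun_sum _ fun i _ => (hF_int i).1)
      (hf.mono fun a ha => ha.tendsto_sum_nat)
  have hc_nonneg : 0 ≤ c := hc.nonneg fun n => integral_nonneg_of_ae (hF_nonneg n)
  have hf_lintegral : ∫⁻ a, ENNReal.ofReal (f a) ∂μ = ENNReal.ofReal c := calc
    ∫⁻ a, ENNReal.ofReal (f a) ∂μ = ∫⁻ a, ∑' n, ENNReal.ofReal (F n a) ∂μ := by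
      refine lintegral_congr_ae ?_
      filter_upwards [hf, hF_nonneg'] with a ha hFa
      rw [← ha.tsum_eq, ENNReal.ofReal_tsum_of_nonneg hFa ha.summable]
    _ = ∑' n, ENNReal.ofReal (∫ a, F n a ∂μ) := by
      rw [lintegral_tsum fun n => (hF_int n).aemeasurable.ennreal_ofReal]
      exact tsum_congr fun n => (ofReal_integral_eq_lintegral_ofReal (hF_int n) (hF_nonneg n)).symm
    _ = ENNReal.ofReal c := by
      rw [← ENNReal.ofReal_tsum_of_nonneg (fun n => integral_nonneg_of_ae (hF_nonneg n))
        hc.summable, hc.tsum_eq]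
  refine ⟨⟨hf_meas, (hasFiniteIntegral_iff_ofReal hf_nonneg).2 ?_⟩, ?_⟩
  · rw [hf_lintegral]; exact ENNReal.ofReal_lt_top
  · rw [integral_eq_lintegral_of_nonneg_ae hf_nonneg hf_meas, hf_lintegral,
      ENNReal.toReal_ofReal hc_nonneg]

theorem integrableOn_and_integral_psi_div_pow_three {k : ℕ} (hk : 3 ≤ k) :
    IntegrableOn (fun y => psi k y / y ^ 3) (Ioi 0) ∧
      ∫ y in Ioi (0 : ℝ), psi k y / y ^ 3 = 1 / (2 * ((k : ℝ) - 1) * ((k : ℝ) - 2)) := by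
  obtain ⟨j, rfl⟩ : ∃ j, k = j + 3 := ⟨k - 3, by omega⟩
  set F : ℕ → ℝ → ℝ := fun n y => exp (-y) * y ^ (n + j) / (n + j + 3)!
  have hF_int (n : ℕ) : IntegrableOn (F n) (Ioi 0) := (integrableOn_exp_neg_mul_pow _).div_const _
  have hF_integral (n : ℕ) :
      ∫ y in Ioi (0 : ℝ), F n y = 1 / ((↑(n + j) + 1) * (↑(n + j) + 2) * (↑(n + j) + 3)) := by
    rw [integral_div, integral_exp_neg_mul_pow, ← factorial_div_factorial_add_three]
  have hF_nonneg (n : ℕ) : 0 ≤ᵐ[volume.restrict (Ioi 0)] F n := by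
    filter_upwards [self_mem_ae_restrict measurableSet_Ioi] with y (hy : 0 < y)
    positivity
  have hF_sum : ∀ᵐ y ∂volume.restrict (Ioi 0), HasSum (fun n => F n y) (psi (j + 3) y / y ^ 3) := by
    filter_upwards [self_mem_ae_restrict measurableSet_Ioi] with y (hy : 0 < y)
    refine ((hasSum_psi (j + 3) y).div_const (y ^ 3)).congr_fun fun n => ?_
    rw [show n + (j + 3) = n + j + 3 by ring, pow_add]
    simp only [F]
    field_simp
  have hc : HasSum (fun n => ∫ y in Ioi (0 : ℝ), F n y)
      (1 / (2 * ((↑(j + 3) : ℝ) - 1) * ((↑(j + 3) : ℝ) - 2))) := by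
    convert hasSum_one_div_mul_mul_add_two (a := j + 1) (by positivity) using 1
    · ext n; rw [hF_integral]; push_cast; ring
    · push_cast; ring
  exact integrable_and_integral_eq_of_hasSum_of_nonneg hF_nonneg hF_int hF_sum hc

theorem integral_Ioo_comp_div_sqrt {E : Type*} [NormedAddCommGroup E] [NormedSpace ℝ E]
    (g : ℝ → E) {B : ℝ} (hB : 0 < B) :
    ∫ x in Ioo 0 1, g (B / √x) = ∫ y in Ioi B, (2 * B ^ 2 / y ^ 3) • g y := by
  set ρ : ℝ → ℝ := fun y => (B / y) ^ 2
  have hρ_image : ρ '' Ioi B = Ioo 0 1 := by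
    ext x
    constructor
    · rintro ⟨y, hy : B < y, rfl⟩
      have hy₀ : 0 < y := hB.trans hy
      exact ⟨by positivity, pow_lt_one₀ (by positivity) ((div_lt_one hy₀).2 hy) two_ne_zero⟩
    · rintro ⟨hx₀, hx₁⟩
      have hsqrt₀ : 0 < √x := sqrt_pos.2 hx₀
      refine ⟨B / √x, ?_, ?_⟩
      · have hsqrt₁ : √x < 1 := (sqrt_lt' one_pos).2 (by rwa [one_pow])
        exact (lt_div_iff₀ hsqrt₀).2 (mul_lt_of_lt_one_right hB hsqrt₁)
      · simp only [ρ, div_div_cancel₀ hB.ne', sq_sqrt hx₀.le]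
  have hρ_deriv (y : ℝ) (hy : y ∈ Ioi B) :
      HasDerivWithinAt ρ (-(2 * B ^ 2 / y ^ 3)) (Ioi B) y := by
    have hy₀ : y ≠ 0 := (hB.trans hy).ne'
    have h := ((hasDerivAt_inv hy₀).const_mul B).fun_pow 2
    simp only [← div_eq_mul_inv] at h
    exact h.hasDerivWithinAt.congr_deriv (by norm_num; field_simp)
  have hρ_anti : AntitoneOn ρ (Ioi B) := fun y (hy : B < y) z (hz : B < z) hyz => by
    have hy₀ : 0 < y := hB.trans hy
    have hz₀ : 0 < z := hB.trans hz
    dsimp only [ρ]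
    gcongr
  rw [← hρ_image, integral_image_eq_integral_deriv_smul_of_antitoneOn measurableSet_Ioi
    hρ_deriv hρ_anti]
  refine setIntegral_congr_fun measurableSet_Ioi fun y (hy : B < y) => ?_
  rw [neg_neg, sqrt_sq (div_pos hB (hB.trans hy)).le, div_div_cancel₀ hB.ne']

theorem hFun_div_eq {k : ℕ} {B : ℝ} (hB : 0 < B) :
    hFun k B / (2 * B ^ 2) = ∫ y in Ioi B, psi k y / y ^ 3 := by
  rw [hFun, ← Measure.restrict_congr_set Ioo_ae_eq_Ioc, integral_Ioo_comp_div_sqrt _ hB,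
    div_eq_iff (by positivity), ← integral_mul_const]
  refine setIntegral_congr_fun measurableSet_Ioi fun y _ => ?_
  rw [smul_eq_mul]
  ring

theorem hFun_limit (k : ℕ) (hk : 3 ≤ k) :
    Tendsto (fun B : ℝ => hFun k B / (2 * B ^ 2)) (nhdsWithin 0 (Set.Ioi 0))
      (nhds (1 / (2 * ((k : ℝ) - 1) * ((k : ℝ) - 2)))) := by
  obtain ⟨hint, hval⟩ := integrableOn_and_integral_psi_div_pow_three hk
  rw [← hval]
  refine (hint.continuousWithinAt_Ici_primitive_Ioi.mono Ioi_subset_Ici_self).congr' ?_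
  filter_upwards [self_mem_nhdsWithin] with B hB
  exact (hFun_div_eq hB).symm
end

section
/- Let k ≥ 3, c₀ = (k-2)/2, and for c > c₀ let A_k(c) be the unique positive solution of A = c·f_k(A), where f_k(B) = 2B·∫_B^∞ ψ_{k-1}(x)·x^{-2} dx. Then, as ε → 0⁺ with c = (1+ε)·c₀, A_k(c) → 0 and A_k(c) ~ ((k-1)!·ε)^{1/(k-2)}. -/
open MeasureTheory Filter

/-- `fk k B = 2 B ∫_B^∞ ψ_{k-1}(x) x⁻² dx`. -/
noncomputable def fk (k : ℕ) (B : ℝ) : ℝ :=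
  2 * B * ∫ x in Set.Ioi B, psi (k - 1) x / x ^ 2

/-!
Write `k = n + 3`. Integrating by parts, `Φ(x) = ψ_{n+1}(x)/(n+1) - ψ_{n+2}(x)/x`
(`psiPrimitive n`) is an antiderivative of `ψ_{n+2}(x)/x²` that vanishes at `0` and tends to
`1/(n+1)` at infinity, so `f_k(B) = 2B (1/(n+1) - Φ(B))` and the fixed-point equation
`A = c f_k(A)` with `c = (1+ε)(n+1)/2` becomes `Φ(A) = ε/((1+ε)(n+1))`. Comparing derivatives
gives `e^{-B} B^{n+1}/((n+1)(n+2)!) ≤ Φ(B) ≤ B^{n+1}/((n+1)(n+2)!)`. As `Φ` is increasing and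
positive on `(0, ∞)`, `Φ(A) → 0` forces `A → 0`, and then the two bounds squeeze
`A^{n+1}/((n+2)! ε)` between `1/(1+ε)` and `e^A/(1+ε)`, both of which tend to `1`.
-/

open Set Real Topology

theorem sub_le_sub_of_hasDerivAt_le {f g f' g' : ℝ → ℝ} {a b : ℝ} (hab : a ≤ b)
    (hf : ContinuousOn f (Icc a b)) (hg : ContinuousOn g (Icc a b))
    (hf' : ∀ x ∈ Ioo a b, HasDerivAt f (f' x) x) (hg' : ∀ x ∈ Ioo a b, HasDerivAt g (g' x) x)
    (h : ∀ x ∈ Ioo a b, f' x ≤ g' x) : f b - f a ≤ g b - g a := by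
  have hmono : MonotoneOn (g - f) (Icc a b) := by
    refine monotoneOn_of_hasDerivWithinAt_nonneg (convex_Icc a b) (hg.sub hf) (f' := g' - f')
      ?_ ?_ <;> rw [interior_Icc] <;> intro x hx
    · exact ((hg' x hx).sub (hf' x hx)).hasDerivWithinAt
    · exact sub_nonneg.2 (h x hx)
  have := hmono (left_mem_Icc.2 hab) (right_mem_Icc.2 hab) hab
  simp only [Pi.sub_apply] at this
  linarith

section Psi

variable (m n : ℕ) {x : ℝ}

theorem hasSum_psi_s18 (x : ℝ) :
    HasSum (fun t : ℕ => if m ≤ t then x ^ t * exp (-x) / t.factorial else 0)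
      (1 - exp (-x) * ∑ t ∈ Finset.range m, x ^ t / t.factorial) := by
  set g : ℕ → ℝ := fun t => x ^ t * exp (-x) / t.factorial
  have hg : HasSum g 1 := by
    have := (NormedSpace.expSeries_div_hasSum_exp x).mul_right (exp (-x))
    rw [← Real.exp_eq_exp_ℝ, ← Real.exp_add, add_neg_cancel, Real.exp_zero] at this
    exact this.congr_fun fun t => by simp only [g]; ring
  have hhead : HasSum (fun t => if t < m then g t else 0) (∑ t ∈ Finset.range m, g t) := by
    have : HasSum (fun t => if t < m then g t else 0)
        (∑ t ∈ Finset.range m, if t < m then g t else 0) :=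
      hasSum_sum_of_ne_finset_zero fun t ht => if_neg (by simpa using ht)
    rwa [Finset.sum_congr rfl fun t ht => if_pos (Finset.mem_range.1 ht)] at this
  have hhead_eq :
      ∑ t ∈ Finset.range m, g t = exp (-x) * ∑ t ∈ Finset.range m, x ^ t / t.factorial := by
    rw [Finset.mul_sum]
    exact Finset.sum_congr rfl fun t _ => by simp only [g]; ring
  rw [← hhead_eq]
  refine (hg.sub hhead).congr_fun fun t => ?_
  split_ifs <;> first | omega | ring

theorem psi_eq_one_sub_exp_mul_sum (x : ℝ) :
    psi m x = 1 - exp (-x) * ∑ t ∈ Finset.range m, x ^ t / t.factorial :=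
  (hasSum_psi_s18 m x).tsum_eq

theorem continuous_psi : Continuous (psi m) := by
  rw [show psi m = _ from funext (psi_eq_one_sub_exp_mul_sum m)]
  fun_prop

theorem psi_nonneg (hx : 0 ≤ x) : 0 ≤ psi m x :=
  tsum_nonneg fun t => by split <;> positivity

theorem psi_le_one (hx : 0 ≤ x) : psi m x ≤ 1 := by
  rw [psi_eq_one_sub_exp_mul_sum]
  exact sub_le_self _ (by positivity)

theorem pow_mul_exp_neg_div_le_psi (hx : 0 ≤ x) : x ^ m * exp (-x) / m.factorial ≤ psi m x := by
  simpa [psi] using (hasSum_psi_s18 m x).summable.le_tsum m fun t _ => by split <;> positivity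

theorem hasDerivAt_pow_succ_div_factorial (x : ℝ) :
    HasDerivAt (fun y : ℝ => y ^ (n + 1) / (n + 1).factorial) (x ^ n / n.factorial) x :=
  ((hasDerivAt_pow (n + 1) x).div_const _).congr_deriv <| by
    rw [Nat.factorial_succ]
    push_cast
    field_simp

theorem hasDerivAt_sum_range_pow_div_factorial (x : ℝ) :
    HasDerivAt (fun y : ℝ => ∑ t ∈ Finset.range (n + 1), y ^ t / t.factorial)
      (∑ t ∈ Finset.range n, x ^ t / t.factorial) x := by
  induction n with
  | zero => simpa using hasDerivAt_const x (1 : ℝ)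
  | succ n ih =>
    simpa only [← Finset.sum_range_succ] using ih.fun_add (hasDerivAt_pow_succ_div_factorial n x)

theorem hasDerivAt_psi_succ (x : ℝ) :
    HasDerivAt (psi (n + 1)) (x ^ n * exp (-x) / n.factorial) x := by
  rw [show psi (n + 1) = _ from funext (psi_eq_one_sub_exp_mul_sum (n + 1))]
  refine ((hasDerivAt_const x 1).fun_sub
    (((hasDerivAt_neg x).exp).fun_mul (hasDerivAt_sum_range_pow_div_factorial n x))).congr_deriv ?_
  rw [Finset.sum_range_succ]
  ring

theorem psi_succ_zero : psi (n + 1) 0 = 0 := by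
  simp [psi_eq_one_sub_exp_mul_sum, Finset.sum_range_succ']

theorem psi_succ_le (hx : 0 ≤ x) : psi (n + 1) x ≤ x ^ (n + 1) / (n + 1).factorial := by
  have := sub_le_sub_of_hasDerivAt_le hx (continuous_psi _).continuousOn (by fun_prop)
    (fun y _ => hasDerivAt_psi_succ n y) (fun y _ => hasDerivAt_pow_succ_div_factorial n y)
    fun y hy => by
      gcongr
      exact mul_le_of_le_one_right (pow_nonneg hy.1.le n) (exp_le_one_iff.2 (by linarith [hy.1]))
  simpa [psi_succ_zero] using this

theorem tendsto_psi_atTop : Tendsto (psi m) atTop (𝓝 1) := by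
  rw [show psi m = _ from funext (psi_eq_one_sub_exp_mul_sum m)]
  have : Tendsto (fun x : ℝ => ∑ t ∈ Finset.range m, x ^ t * exp (-x) / t.factorial)
      atTop (𝓝 0) := by
    simpa using tendsto_finsetSum (Finset.range m) fun t _ =>
      (tendsto_pow_mul_exp_neg_atTop_nhds_zero t).div_const (t.factorial : ℝ)
  simpa [Finset.mul_sum, div_mul_eq_mul_div, mul_comm] using
    (tendsto_const_nhds (x := (1 : ℝ))).sub this

end Psi

-- At `x = 0` the second term is the junk value `_ / 0 = 0`, which agrees with its limit.
noncomputable def psiPrimitive (n : ℕ) (x : ℝ) : ℝ :=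
  psi (n + 1) x / (n + 1) - psi (n + 2) x / x

section Primitive

variable (n : ℕ) {x B : ℝ}

theorem hasDerivAt_psiPrimitive (hx : x ≠ 0) :
    HasDerivAt (psiPrimitive n) (psi (n + 2) x / x ^ 2) x := by
  refine (((hasDerivAt_psi_succ n x).div_const (n + 1 : ℝ)).fun_sub
    ((hasDerivAt_psi_succ (n + 1) x).fun_div (hasDerivAt_id' x) hx)).congr_deriv ?_
  rw [Nat.factorial_succ]
  push_cast
  field_simp
  ring

theorem psiPrimitive_zero : psiPrimitive n 0 = 0 := by
  simp [psiPrimitive, psi_succ_zero]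

theorem continuousOn_psiPrimitive : ContinuousOn (psiPrimitive n) (Ici 0) := by
  intro x hx
  rcases (mem_Ici.1 hx).eq_or_lt with rfl | hx
  · have hdiv : Tendsto (fun y => psi (n + 2) y / y) (𝓝[≥] 0) (𝓝 0) := by
      have hpow := ((continuous_pow (n + 1)).div_const ((n + 2).factorial : ℝ)).continuousWithinAt
        (s := Ici 0) (x := 0)
      rw [ContinuousWithinAt, zero_pow n.succ_ne_zero, zero_div] at hpow
      refine squeeze_zero' ?_ ?_ hpow <;> filter_upwards [self_mem_nhdsWithin] with y (hy : 0 ≤ y)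
      · exact div_nonneg (psi_nonneg _ hy) hy
      · rcases hy.eq_or_lt with rfl | hy
        · simp
        calc psi (n + 2) y / y ≤ y ^ (n + 2) / (n + 2).factorial / y := by
              gcongr; exact psi_succ_le (n + 1) hy.le
          _ = y ^ (n + 1) / (n + 2).factorial := by field_simp; ring
    have hpsi := ((continuous_psi (n + 1)).div_const (n + 1 : ℝ)).continuousWithinAt
      (s := Ici 0) (x := 0)
    rw [ContinuousWithinAt, psi_succ_zero, zero_div] at hpsi
    rw [ContinuousWithinAt, psiPrimitive_zero]
    have := hpsi.sub hdiv
    rwa [sub_zero] at this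
  · exact (hasDerivAt_psiPrimitive n hx.ne').continuousAt.continuousWithinAt

theorem monotoneOn_psiPrimitive : MonotoneOn (psiPrimitive n) (Ici 0) :=
  monotoneOn_of_hasDerivWithinAt_nonneg (convex_Ici 0) (continuousOn_psiPrimitive n)
    (fun x hx => (hasDerivAt_psiPrimitive n (ne_of_gt (by simpa using hx))).hasDerivWithinAt)
    fun x hx => div_nonneg (psi_nonneg _ (le_of_lt (by simpa using hx))) (sq_nonneg x)

theorem tendsto_psiPrimitive_atTop : Tendsto (psiPrimitive n) atTop (𝓝 (1 / (n + 1))) := by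
  have hdiv : Tendsto (fun x => psi (n + 2) x / x) atTop (𝓝 0) := by
    refine squeeze_zero' ?_ ?_ tendsto_inv_atTop_zero
    · filter_upwards [eventually_ge_atTop 0] with x hx
      exact div_nonneg (psi_nonneg _ hx) hx
    · filter_upwards [eventually_gt_atTop 0] with x hx
      simpa [one_div] using div_le_div_of_nonneg_right (psi_le_one _ hx.le) hx.le
  have := ((tendsto_psi_atTop (n + 1)).div_const (n + 1 : ℝ)).sub hdiv
  rwa [sub_zero] at this

theorem integrableOn_psi_div_sq (m : ℕ) (hB : 0 < B) :
    IntegrableOn (fun x => psi m x / x ^ 2) (Ioi B) := by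
  refine (integrableOn_Ioi_rpow_of_lt (by norm_num : (-2 : ℝ) < -1) hB).mono'
    ((continuous_psi m).measurable.div (continuous_pow 2).measurable).aestronglyMeasurable ?_
  filter_upwards [ae_restrict_mem measurableSet_Ioi] with x hx
  have hx0 : 0 < x := hB.trans hx
  rw [norm_div, Real.norm_of_nonneg (psi_nonneg m hx0.le), Real.norm_of_nonneg (by positivity),
    rpow_neg hx0.le, rpow_two, ← one_div]
  exact div_le_div_of_nonneg_right (psi_le_one m hx0.le) (by positivity)

theorem integral_psi_div_sq (hB : 0 < B) :
    ∫ x in Ioi B, psi (n + 2) x / x ^ 2 = 1 / (n + 1) - psiPrimitive n B :=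
  integral_Ioi_of_hasDerivAt_of_tendsto'
    (fun _ hx => hasDerivAt_psiPrimitive n (hB.trans_le hx).ne')
    (integrableOn_psi_div_sq (n + 2) hB) (tendsto_psiPrimitive_atTop n)

theorem fk_eq (hB : 0 < B) : fk (n + 3) B = 2 * B * (1 / (n + 1) - psiPrimitive n B) := by
  rw [fk, show n + 3 - 1 = n + 2 from rfl, integral_psi_div_sq n hB]

end Primitive

section Bounds

variable (n : ℕ) {y B : ℝ}

theorem psi_div_sq_le (hy : 0 < y) : psi (n + 2) y / y ^ 2 ≤ y ^ n / (n + 2).factorial :=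
  calc psi (n + 2) y / y ^ 2 ≤ y ^ (n + 2) / (n + 2).factorial / y ^ 2 := by
        gcongr; exact psi_succ_le (n + 1) hy.le
    _ = y ^ n / (n + 2).factorial := by field_simp; ring

theorem exp_neg_mul_le_psi_div_sq (hy : 0 < y) :
    exp (-y) * (y ^ n / (n + 2).factorial) ≤ psi (n + 2) y / y ^ 2 :=
  calc exp (-y) * (y ^ n / (n + 2).factorial)
      = y ^ (n + 2) * exp (-y) / (n + 2).factorial / y ^ 2 := by field_simp; ring
    _ ≤ psi (n + 2) y / y ^ 2 := by gcongr; exact pow_mul_exp_neg_div_le_psi _ hy.le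

theorem hasDerivAt_pow_succ_div_mul_factorial (x : ℝ) :
    HasDerivAt (fun y : ℝ => y ^ (n + 1) / ((n + 1) * (n + 2).factorial))
      (x ^ n / (n + 2).factorial) x :=
  ((hasDerivAt_pow (n + 1) x).div_const _).congr_deriv <| by
    push_cast
    field_simp

theorem psiPrimitive_le (hB : 0 ≤ B) :
    psiPrimitive n B ≤ B ^ (n + 1) / ((n + 1) * (n + 2).factorial) := by
  have := sub_le_sub_of_hasDerivAt_le hB ((continuousOn_psiPrimitive n).mono Icc_subset_Ici_self)
    (by fun_prop) (fun y hy => hasDerivAt_psiPrimitive n hy.1.ne')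
    (fun y _ => hasDerivAt_pow_succ_div_mul_factorial n y) fun y hy => psi_div_sq_le n hy.1
  simpa [psiPrimitive_zero] using this

theorem exp_neg_mul_le_psiPrimitive (hB : 0 ≤ B) :
    exp (-B) * (B ^ (n + 1) / ((n + 1) * (n + 2).factorial)) ≤ psiPrimitive n B := by
  have := sub_le_sub_of_hasDerivAt_le hB (by fun_prop)
    ((continuousOn_psiPrimitive n).mono Icc_subset_Ici_self)
    (fun y _ => (hasDerivAt_pow_succ_div_mul_factorial n y).const_mul (exp (-B)))
    (fun y hy => hasDerivAt_psiPrimitive n hy.1.ne') fun y hy =>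
      (mul_le_mul_of_nonneg_right (exp_le_exp.2 (neg_le_neg hy.2.le))
        (div_nonneg (pow_nonneg hy.1.le n) (by positivity))).trans
        (exp_neg_mul_le_psi_div_sq n hy.1)
  simpa [psiPrimitive_zero] using this

theorem psiPrimitive_pos (hB : 0 < B) : 0 < psiPrimitive n B :=
  lt_of_lt_of_le (by positivity) (exp_neg_mul_le_psiPrimitive n hB.le)

end Bounds

theorem tendsto_nhds_zero_of_monotoneOn {α : Type*} {l : Filter α} {F : ℝ → ℝ} {a : α → ℝ}
    (hF : MonotoneOn F (Ici 0)) (hF_pos : ∀ x, 0 < x → 0 < F x) (ha : ∀ᶠ i in l, 0 ≤ a i)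
    (hFa : Tendsto (fun i => F (a i)) l (𝓝 0)) : Tendsto a l (𝓝 0) := by
  refine tendsto_order.2 ⟨fun b hb => ha.mono fun i hi => hb.trans_le hi, fun δ hδ => ?_⟩
  filter_upwards [ha, hFa.eventually (gt_mem_nhds (hF_pos δ hδ))] with i hi hFi
  by_contra! hle
  exact (hF hδ.le hi hle).not_gt hFi

theorem psiPrimitive_eq_of_eq_mul_fk (n : ℕ) {c B : ℝ} (hB : 0 < B) (h : B = c * fk (n + 3) B) :
    psiPrimitive n B = 1 / (n + 1) - 1 / (2 * c) := by
  rw [fk_eq n hB] at h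
  have h1 : 1 = 2 * c * (1 / (n + 1) - psiPrimitive n B) :=
    mul_left_cancel₀ hB.ne' (by linear_combination h)
  have hc : c ≠ 0 := by rintro rfl; simp at h1
  field_simp at h1 ⊢
  linear_combination h1

theorem pow_div_mem_Icc_of_psiPrimitive_eq (n : ℕ) {ε B : ℝ} (hε : 0 < ε) (hB : 0 ≤ B)
    (h : psiPrimitive n B = ε / ((1 + ε) * (n + 1))) :
    B ^ (n + 1) / ((n + 2).factorial * ε) ∈ Icc (1 / (1 + ε)) (exp B / (1 + ε)) := by
  have hup := psiPrimitive_le n hB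
  have hlow := exp_neg_mul_le_psiPrimitive n hB
  rw [h, div_le_div_iff₀ (by positivity) (by positivity)] at hup
  rw [h, mul_div_assoc', div_le_div_iff₀ (by positivity) (by positivity)] at hlow
  rw [mem_Icc, div_le_div_iff₀ (by positivity) (by positivity),
    div_le_div_iff₀ (by positivity) (by positivity)]
  have hn : (0 : ℝ) < n + 1 := by positivity
  constructor
  · nlinarith
  · have hexp : exp (-B) * (B ^ (n + 1) * (1 + ε)) ≤ (n + 2).factorial * ε := by
      nlinarith
    calc B ^ (n + 1) * (1 + ε) = exp B * (exp (-B) * (B ^ (n + 1) * (1 + ε))) := by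
          rw [← mul_assoc, ← exp_add, add_neg_cancel, exp_zero, one_mul]
      _ ≤ exp B * ((n + 2).factorial * ε) := by gcongr

section FixedPoint

variable {n : ℕ} {a : ℝ → ℝ}

theorem tendsto_zero_of_psiPrimitive_eq
    (ha : ∀ ε > 0, 0 < a ε ∧ psiPrimitive n (a ε) = ε / ((1 + ε) * (n + 1))) :
    Tendsto a (𝓝[>] 0) (𝓝 0) := by
  have hcont : ContinuousAt (fun ε : ℝ => ε / ((1 + ε) * (n + 1))) 0 := by
    fun_prop (disch := positivity)
  have hlim : Tendsto (fun ε : ℝ => ε / ((1 + ε) * (n + 1))) (𝓝[>] 0) (𝓝 0) := by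
    simpa using hcont.tendsto.mono_left nhdsWithin_le_nhds
  exact tendsto_nhds_zero_of_monotoneOn (monotoneOn_psiPrimitive n) (fun _ => psiPrimitive_pos n)
    (eventually_mem_nhdsWithin.mono fun ε hε => (ha ε hε).1.le)
    (hlim.congr' (eventually_mem_nhdsWithin.mono fun ε hε => (ha ε hε).2.symm))

theorem tendsto_pow_div_of_psiPrimitive_eq
    (ha : ∀ ε > 0, 0 < a ε ∧ psiPrimitive n (a ε) = ε / ((1 + ε) * (n + 1))) :
    Tendsto (fun ε => a ε ^ (n + 1) / ((n + 2).factorial * ε)) (𝓝[>] 0) (𝓝 1) := by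
  have hsucc : Tendsto (fun ε : ℝ => 1 + ε) (𝓝[>] 0) (𝓝 1) :=
    ((continuous_const.add continuous_id).tendsto' 0 1 (by simp)).mono_left nhdsWithin_le_nhds
  have hlow : Tendsto (fun ε : ℝ => 1 / (1 + ε)) (𝓝[>] 0) (𝓝 1) := by
    simpa [Pi.div_def] using (tendsto_const_nhds (x := (1 : ℝ))).div hsucc one_ne_zero
  have hhigh : Tendsto (fun ε => exp (a ε) / (1 + ε)) (𝓝[>] 0) (𝓝 1) := by
    simpa [Pi.div_def] using (tendsto_zero_of_psiPrimitive_eq ha).rexp.div hsucc one_ne_zero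
  have hbounds := fun ε hε => pow_div_mem_Icc_of_psiPrimitive_eq n hε (ha ε hε).1.le (ha ε hε).2
  exact tendsto_of_tendsto_of_tendsto_of_le_of_le' hlow hhigh
    (eventually_mem_nhdsWithin.mono fun ε hε => (hbounds ε hε).1)
    (eventually_mem_nhdsWithin.mono fun ε hε => (hbounds ε hε).2)

theorem tendsto_div_rpow_of_psiPrimitive_eq
    (ha : ∀ ε > 0, 0 < a ε ∧ psiPrimitive n (a ε) = ε / ((1 + ε) * (n + 1))) :
    Tendsto (fun ε => a ε / ((n + 2).factorial * ε) ^ (1 / ((n : ℝ) + 1))) (𝓝[>] 0) (𝓝 1) := by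
  have := (tendsto_pow_div_of_psiPrimitive_eq ha).rpow_const (p := 1 / ((n : ℝ) + 1))
    (Or.inl one_ne_zero)
  rw [one_rpow] at this
  refine this.congr' (eventually_mem_nhdsWithin.mono fun ε (hε : 0 < ε) => ?_)
  have hroot := pow_rpow_inv_natCast (ha ε hε).1.le n.succ_ne_zero
  push_cast at hroot
  rw [div_rpow (pow_nonneg (ha ε hε).1.le _) (by positivity), one_div, hroot]

end FixedPoint

theorem Ak_asymptotics (k : ℕ) (hk : 3 ≤ k) (A : ℝ → ℝ)
    (hA : ∀ c : ℝ, ((k : ℝ) - 2) / 2 < c →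
      0 < A c ∧ A c = c * fk k (A c) ∧ ∀ B : ℝ, 0 < B → B = c * fk k B → B = A c) :
    Tendsto (fun ε : ℝ => A ((1 + ε) * (((k : ℝ) - 2) / 2)))
      (nhdsWithin 0 (Set.Ioi 0)) (nhds 0) ∧
    Tendsto (fun ε : ℝ => A ((1 + ε) * (((k : ℝ) - 2) / 2)) /
        (((k - 1).factorial * ε) ^ ((1 : ℝ) / ((k : ℝ) - 2))))
      (nhdsWithin 0 (Set.Ioi 0)) (nhds 1) := by
  obtain ⟨n, rfl⟩ : ∃ n, k = n + 3 := ⟨k - 3, by omega⟩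
  have hk2 : ((n + 3 : ℕ) : ℝ) - 2 = n + 1 := by push_cast; ring
  simp only [hk2, show n + 3 - 1 = n + 2 from rfl]
  have ha : ∀ ε > 0, 0 < A ((1 + ε) * ((n + 1) / 2)) ∧
      psiPrimitive n (A ((1 + ε) * ((n + 1) / 2))) = ε / ((1 + ε) * (n + 1)) := by
    intro ε hε
    obtain ⟨hpos, hfix, -⟩ := hA ((1 + ε) * ((n + 1) / 2)) (by rw [hk2]; nlinarith)
    refine ⟨hpos, ?_⟩
    rw [psiPrimitive_eq_of_eq_mul_fk n hpos hfix]
    field_simp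
    ring
  exact ⟨tendsto_zero_of_psiPrimitive_eq ha, tendsto_div_rpow_of_psiPrimitive_eq ha⟩
end
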